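/- The map φ : S_n → S_n is a bijection. -/

import Mathlib

namespace PaperStats

/-- `des w` is the number of descents of the word `w` (0-indexed positions `i`
with `w(i) > w(i+1)`). -/
def des (w : List ℕ) : ℕ :=
  ((Finset.range (w.length - 1)).filter fun i => w.getD (i + 1) 0 < w.getD i 0).card

/-- `inv w` is the number of inversions of the word `w`: pairs of positions
`i < j` with `w(i) > w(j)`. -/
def inv (w : List ℕ) : ℕ :=
  ((Finset.range w.length ×ˢ Finset.range w.length).filter
    fun p => p.1 < p.2 ∧ w.getD p.2 0 < w.getD p.1 0).card

/-- An inversion `(i,j)` of `w` is admissible if either `w(j) < w(j+1)`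
(`j` is not the last position and is followed by an ascent), or there is a
position `k` strictly between `i` and `j` with `w(j) > w(k)`. -/
def IsAdmissible (w : List ℕ) (i j : ℕ) : Prop :=
  (j + 1 < w.length ∧ w.getD j 0 < w.getD (j + 1) 0) ∨
    ∃ k, i < k ∧ k < j ∧ w.getD k 0 < w.getD j 0

instance (w : List ℕ) (i j : ℕ) : Decidable (IsAdmissible w i j) :=
  decidable_of_iff ((j + 1 < w.length ∧ w.getD j 0 < w.getD (j + 1) 0) ∨
      ∃ k ∈ Finset.Ioo i j, w.getD k 0 < w.getD j 0) (by
    unfold IsAdmissible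
    simp only [Finset.mem_Ioo, and_assoc])

/-- `ai w` is the number of admissible inversions of `w`. -/
def ai (w : List ℕ) : ℕ :=
  ((Finset.range w.length ×ˢ Finset.range w.length).filter
    fun p => p.1 < p.2 ∧ w.getD p.2 0 < w.getD p.1 0 ∧ IsAdmissible w p.1 p.2).card

/-- `aid w = ai w + des w`. -/
def aid (w : List ℕ) : ℕ := ai w + des w

/-- The statistic `aix`, defined recursively: `aix ∅ = 0`; writing a nonempty
word as `π = α m β`, where `m` is the smallest letter and `α` is the maximal
prefix not containing `m`, one has `aix π = 1 + aix β` if `α = ∅`,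
`aix π = 0` if `β = ∅` (and `α ≠ ∅`), and `aix π = aix α` otherwise. -/
def aix : List ℕ → ℕ
  | [] => 0
  | x :: xs =>
    if (x :: xs).takeWhile (fun a => decide (a ≠ xs.foldr min x)) = [] then
      1 + aix (((x :: xs).dropWhile (fun a => decide (a ≠ xs.foldr min x))).tail)
    else if ((x :: xs).dropWhile (fun a => decide (a ≠ xs.foldr min x))).tail = [] then 0
    else aix ((x :: xs).takeWhile (fun a => decide (a ≠ xs.foldr min x)))
termination_by w => w.length
decreasing_by
  · simp only [List.foldr_attach] at *
    have h1 := (List.dropWhile_sublist (l := x :: xs) (fun a => decide (a ≠ xs.foldr min x))).length_le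
    have h2 := List.length_tail (l := (x :: xs).dropWhile (fun a => decide (a ≠ xs.foldr min x)))
    simp only [List.length_cons] at *
    omega
  · rename_i hα hβ
    simp only [List.foldr_attach] at *
    try simp only [List.foldr_attach] at *
    have h0 : ((x :: xs).takeWhile (fun a => decide (a ≠ xs.foldr min x))) ++
        ((x :: xs).dropWhile (fun a => decide (a ≠ xs.foldr min x))) = x :: xs :=
      List.takeWhile_append_dropWhile ..
    have h1 : ((x :: xs).dropWhile (fun a => decide (a ≠ xs.foldr min x))) ≠ [] := by
      intro h
      apply hβ
      rw [h]
      rfl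
    have h2 := congrArg List.length h0
    simp only [List.length_append, List.length_cons] at h2
    have h3 : 0 < ((x :: xs).dropWhile (fun a => decide (a ≠ xs.foldr min x))).length :=
      List.length_pos_iff.mpr h1
    simp only [List.length_cons]
    omega

/-- The map `f(k,τ)`: with `m` the smallest letter of `τ` together with `k`
(`k` not occurring in `τ`), and `τ = α m β` with `α` the maximal prefix of `τ`
avoiding `m`: `f(k,∅) = k`; `f(k,τ) = kτ` if `k = m`; and for `k > m`,
`f(k,τ) = f(k,β) m` if `α = ∅`, `f(k,τ) = k m α` if `β = ∅`, and
`f(k,τ) = f(k,α) m β` otherwise. -/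
def fkt (k : ℕ) : List ℕ → List ℕ
  | [] => [k]
  | x :: xs =>
    if k < xs.foldr min x then k :: x :: xs
    else if (x :: xs).takeWhile (fun a => decide (a ≠ xs.foldr min x)) = [] then
      fkt k (((x :: xs).dropWhile (fun a => decide (a ≠ xs.foldr min x))).tail) ++
        [xs.foldr min x]
    else if ((x :: xs).dropWhile (fun a => decide (a ≠ xs.foldr min x))).tail = [] then
      k :: xs.foldr min x :: ((x :: xs).takeWhile (fun a => decide (a ≠ xs.foldr min x)))
    else
      fkt k ((x :: xs).takeWhile (fun a => decide (a ≠ xs.foldr min x))) ++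
        xs.foldr min x :: ((x :: xs).dropWhile (fun a => decide (a ≠ xs.foldr min x))).tail
termination_by w => w.length
decreasing_by
  · simp only [List.foldr_attach] at *
    have h1 := (List.dropWhile_sublist (l := x :: xs) (fun a => decide (a ≠ xs.foldr min x))).length_le
    have h2 := List.length_tail (l := (x :: xs).dropWhile (fun a => decide (a ≠ xs.foldr min x)))
    simp only [List.length_cons] at *
    omega
  · rename_i hk hα hβ
    simp only [List.foldr_attach] at *
    try simp only [List.foldr_attach] at *
    have h0 : ((x :: xs).takeWhile (fun a => decide (a ≠ xs.foldr min x))) ++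
        ((x :: xs).dropWhile (fun a => decide (a ≠ xs.foldr min x))) = x :: xs :=
      List.takeWhile_append_dropWhile ..
    have h1 : ((x :: xs).dropWhile (fun a => decide (a ≠ xs.foldr min x))) ≠ [] := by
      intro h
      apply hβ
      rw [h]
      rfl
    have h2 := congrArg List.length h0
    simp only [List.length_append, List.length_cons] at h2
    have h3 : 0 < ((x :: xs).dropWhile (fun a => decide (a ≠ xs.foldr min x))).length :=
      List.length_pos_iff.mpr h1
    simp only [List.length_cons]
    omega

/-- `ini w` is the first letter of `w`. -/
def ini (w : List ℕ) : ℕ := w.headD 0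

/-- The word of a permutation `π ∈ S_n`, namely `π(1) π(2) … π(n)`
(with values in `{1, …, n}`). -/
def permList {n : ℕ} (π : Equiv.Perm (Fin n)) : List ℕ :=
  List.ofFn fun i => (π i : ℕ) + 1

/-- The bijection `φ`: `φ(π) = f(π(1), f(π(2), ⋯ f(π(n), ∅) ⋯ ))`. -/
def phiW (w : List ℕ) : List ℕ := w.foldr fkt []

/-- Helper: `decRun l` splits `l` into its maximal weakly decreasing prefix
and the rest. -/
def decRun : List ℕ → List ℕ × List ℕ
  | [] => ([], [])
  | [x] => ([x], [])
  | x :: y :: rest =>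
    if y ≤ x then ((x :: (decRun (y :: rest)).1), (decRun (y :: rest)).2)
    else ([x], y :: rest)

theorem decRun_append : ∀ l : List ℕ, (decRun l).1 ++ (decRun l).2 = l
  | [] => rfl
  | [x] => rfl
  | x :: y :: rest => by
    rw [decRun]
    split
    · simpa using decRun_append (y :: rest)
    · rfl

/-- Helper computing the hook factorization of a word from its reversal: the
rightmost hook of the word starts at its rightmost descent top, i.e. it is
obtained by extending the maximal weakly decreasing prefix of the reversed word
by one more letter; the process is repeated on what remains, and when no
letters usable for a hook remain the word left over is the increasing part
`π₀`. The result is `(π₀, [π₁, …, π_k])`. -/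
def hookRev (r : List ℕ) : List ℕ × List (List ℕ) :=
  match h : (decRun r).2 with
  | [] => (r.reverse, [])
  | z :: rest =>
    ((hookRev rest).1, (hookRev rest).2 ++ [z :: (decRun r).1.reverse])
termination_by r.length
decreasing_by
  have h2 := congrArg List.length (decRun_append r)
  rw [h] at h2
  simp only [List.length_append, List.length_cons] at h2
  omega

/-- The hook factorization `(π₀, [π₁, …, π_k])` of a word
`w = π₀ π₁ ⋯ π_k`, where `π₀` is increasing and each `π_i`, `i ≥ 1`, is a
hook. -/
def hookSplit (w : List ℕ) : List ℕ × List (List ℕ) := hookRev w.reverse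

/-- `pix w` is the length of the initial increasing factor `π₀` in the hook
factorization of `w`. -/
def pix (w : List ℕ) : ℕ := (hookSplit w).1.length

/-- `lec w` is the sum of the numbers of inversions of the hooks in the hook
factorization of `w`. -/
def lec (w : List ℕ) : ℕ := ((hookSplit w).2.map inv).sum

/-- A word `w(1) … w(r)` with `r ≥ 2` is a hook if
`w(1) > w(2) ≤ w(3) ≤ ⋯ ≤ w(r)`. -/
def IsHook (w : List ℕ) : Prop :=
  ∃ a b rest, w = a :: b :: rest ∧ b < a ∧ List.Chain' (· ≤ ·) (b :: rest)

/-- `w(i)` is a left-to-right maximum of `w` if `w(k) < w(i)` for all `k < i`. -/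
def IsLRMax (w : List ℕ) (i : ℕ) : Prop := ∀ k < i, w.getD k 0 < w.getD i 0

instance (w : List ℕ) (i : ℕ) : Decidable (IsLRMax w i) := by
  unfold IsLRMax; infer_instance

/-- `mix w` counts the pairs of positions `i < j` such that either
`w(i) > w(j)` and `w(i)` is a left-to-right maximum, or `w(i) < w(j)` and
there is `k < i` with `w(k) > w(j)`. -/
def mix (w : List ℕ) : ℕ :=
  ((Finset.range w.length ×ˢ Finset.range w.length).filter fun p =>
    p.1 < p.2 ∧ ((w.getD p.2 0 < w.getD p.1 0 ∧ IsLRMax w p.1) ∨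
      (w.getD p.1 0 < w.getD p.2 0 ∧ ∃ k ∈ Finset.range p.1, w.getD p.2 0 < w.getD k 0))).card

/-- `das w` counts the positions `i` such that either `w(i) > w(i+1)` and
`w(i)` is a left-to-right maximum, or `w(i) < w(i+1)` and there is `k < i`
with `w(k) > w(i+1)`. -/
def das (w : List ℕ) : ℕ :=
  ((Finset.range (w.length - 1)).filter fun i =>
    (w.getD (i + 1) 0 < w.getD i 0 ∧ IsLRMax w i) ∨
      (w.getD i 0 < w.getD (i + 1) 0 ∧ ∃ k ∈ Finset.range i, w.getD (i + 1) 0 < w.getD k 0)).card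

/-- The values of the left-to-right maxima of a word, listed in increasing
order (which is also their order of occurrence). -/
def lrMaxima : List ℕ → List ℕ
  | [] => []
  | x :: xs => x :: lrMaxima (xs.filter fun a => decide (x < a))
termination_by l => l.length
decreasing_by
  have := xs.length_filter_le (fun a => decide (x < a))
  simp only [List.length_unattach] at *
  exact Nat.lt_succ_of_le ((List.length_filter_le _ _).trans (List.length_attach (l := xs)).le)

/-- `Bset w m` is the list of entries of `w` that are smaller than `m` and lie
to the right of (the first occurrence of) `m` in `w`. -/
def Bset (w : List ℕ) (m : ℕ) : List ℕ :=
  ((w.dropWhile fun a => decide (a ≠ m)).tail).filter fun a => decide (a < m)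

/-- Helper for `psiS`: replace the letters satisfying `P`, in order, by the
letters of the first list. -/
def replaceSub (P : ℕ → Bool) : List ℕ → List ℕ → List ℕ
  | _, [] => []
  | rs, x :: xs =>
    if P x then rs.headD x :: replaceSub P rs.tail xs else x :: replaceSub P rs xs

/-- `psiS S w` is `ψ_S(w)`: the result of reversing, in place, the subword of
`w` consisting of the entries belonging to `S`. -/
def psiS (S : List ℕ) (w : List ℕ) : List ℕ :=
  replaceSub (fun a => decide (a ∈ S)) ((w.filter fun a => decide (a ∈ S)).reverse) w

/-- Helper applying the alternating composition
`ψ_{B₁} ∘ ψ_{B₂ ∩ B₁} ∘ ψ_{B₂} ∘ ⋯ ∘ ψ_{B_{k-1}} ∘ ψ_{B_k ∩ B_{k-1}} ∘ ψ_{B_k}`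
to `w`, given the list `[B_k, B_{k-1}, …, B₁]`. -/
def psiChain : List (List ℕ) → List ℕ → List ℕ
  | [], w => w
  | [B], w => psiS B w
  | B :: B' :: rest, w => psiChain (B' :: rest) (psiS (B.inter B') (psiS B w))

/-- The Brändén–Claesson bijection `ψ`. -/
def psi (w : List ℕ) : List ℕ :=
  psiChain (((lrMaxima w).map (Bset w)).reverse) w

/-!
Each step `f(k, ·)` only rearranges the letters of `k τ`, so `φ` maps `S_n` into itself, and as
`S_n` is finite it suffices that `f(k, τ)` determines `k` and `τ`. Write `σ = f(k, τ)` as `γ m δ`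
with `m` its smallest letter. The position of `m` tells which rule produced `σ`: `m` first means
`σ = k τ`, `m` second means `σ = k m α`, `m` last means `σ = f(k, β) m`, and otherwise
`σ = f(k, α) m β`; in the last two cases `k` and `β` resp. `α` are recovered from `γ` recursively.
-/

section MinSplit

variable {ι : Type*} [LinearOrder ι]

theorem le_foldr_min_iff {c x : ι} {xs : List ι} :
    c ≤ xs.foldr min x ↔ ∀ a ∈ x :: xs, c ≤ a := by
  induction xs with
  | nil => simp
  | cons y ys ih => simp only [List.foldr_cons, le_min_iff, ih, List.forall_mem_cons, and_left_comm]

/-- The paper's decomposition `τ = α m β` at the first occurrence of the smallest letter `m`;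
`fkt` reads it off as `takeWhile (· ≠ m)` and `(dropWhile (· ≠ m)).tail`. -/
def IsMinSplit (α : List ι) (m : ι) (β : List ι) : Prop :=
  (∀ a ∈ α, m < a) ∧ ∀ a ∈ β, m ≤ a

namespace IsMinSplit

variable {α β : List ι} {m : ι}

theorem le_of_mem (h : IsMinSplit α m β) {a : ι} (ha : a ∈ α ++ m :: β) : m ≤ a := by
  simp only [List.mem_append, List.mem_cons] at ha
  rcases ha with ha | rfl | ha
  exacts [(h.1 a ha).le, le_rfl, h.2 a ha]

theorem foldr_min (h : IsMinSplit α m β) {x : ι} {xs : List ι} (hxs : x :: xs = α ++ m :: β) :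
    xs.foldr min x = m :=
  le_antisymm (le_foldr_min_iff.1 le_rfl m (by simp [hxs]))
    (le_foldr_min_iff.2 fun a ha => h.le_of_mem (hxs ▸ ha))

theorem takeWhile (h : IsMinSplit α m β) :
    (α ++ m :: β).takeWhile (fun a => decide (a ≠ m)) = α := by
  rw [List.takeWhile_append_of_pos (by simpa using fun a ha => (h.1 a ha).ne')]
  simp

theorem dropWhile_tail (h : IsMinSplit α m β) :
    ((α ++ m :: β).dropWhile (fun a => decide (a ≠ m))).tail = β := by
  rw [List.dropWhile_append_of_pos (by simpa using fun a ha => (h.1 a ha).ne')]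
  simp

end IsMinSplit

theorem exists_isMinSplit : ∀ {l : List ι}, l ≠ [] → ∃ α m β, l = α ++ m :: β ∧ IsMinSplit α m β
  | [y], _ => ⟨[], y, [], rfl, by simp [IsMinSplit]⟩
  | y :: z :: zs, _ => by
    obtain ⟨α, m, β, hl, h⟩ := exists_isMinSplit (l := z :: zs) (by simp)
    by_cases hym : y ≤ m
    · exact ⟨[], y, z :: zs, rfl, by simp, fun a ha => hym.trans (h.le_of_mem (hl ▸ ha))⟩
    · refine ⟨y :: α, m, β, by simp [hl], ?_, h.2⟩
      simpa [not_le.1 hym] using h.1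

theorem IsMinSplit.induction {P : List ι → Prop} (nil : P [])
    (split : ∀ α m β, IsMinSplit α m β → P α → P β → P (α ++ m :: β)) (l : List ι) : P l := by
  induction hl : l.length using Nat.strong_induction_on generalizing l with
  | _ n ih =>
    rcases eq_or_ne l [] with rfl | hne
    · exact nil
    obtain ⟨α, m, β, rfl, h⟩ := exists_isMinSplit hne
    simp only [List.length_append, List.length_cons] at hl
    exact split α m β h (ih _ (by omega) α rfl) (ih _ (by omega) β rfl)

end MinSplit

theorem fkt_of_isMinSplit (k : ℕ) {α β : List ℕ} {m : ℕ} (h : IsMinSplit α m β) :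
    fkt k (α ++ m :: β) =
      if k < m then k :: (α ++ m :: β)
      else if α = [] then fkt k β ++ [m]
      else if β = [] then k :: m :: α
      else fkt k α ++ m :: β := by
  obtain ⟨x, xs, hxs⟩ : ∃ x xs, x :: xs = α ++ m :: β := by cases α <;> simp
  rw [← hxs, fkt, h.foldr_min hxs, hxs, h.takeWhile, h.dropWhile_tail]

theorem fkt_perm (k : ℕ) (l : List ℕ) : (fkt k l).Perm (k :: l) := by
  induction l using IsMinSplit.induction with
  | nil => simp [fkt]
  | split α m β h ihα ihβ =>
    rw [fkt_of_isMinSplit k h]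
    split_ifs with hkm hα hβ
    · rfl
    · subst hα
      exact (ihβ.append_right [m]).trans (by simp)
    · subst hβ
      exact (List.perm_append_singleton m α).symm.cons k
    · exact ihα.append_right (m :: β)

theorem phiW_perm (w : List ℕ) : (phiW w).Perm w := by
  induction w with
  | nil => rfl
  | cons a w ih => exact (fkt_perm a (phiW w)).trans (ih.cons a)

theorem lt_of_mem_fkt {k m : ℕ} {l : List ℕ} (hk : m < k) (hl : ∀ a ∈ l, m < a) :
    ∀ a ∈ fkt k l, m < a := by
  intro a ha
  rcases List.mem_cons.1 ((fkt_perm k l).mem_iff.1 ha) with rfl | ha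
  exacts [hk, hl a ha]

theorem length_fkt (k : ℕ) (l : List ℕ) : (fkt k l).length = l.length + 1 :=
  (fkt_perm k l).length_eq

theorem fkt_ne_nil (k : ℕ) (l : List ℕ) : fkt k l ≠ [] :=
  List.ne_nil_of_length_pos (by simp [length_fkt])

def fktInv : List ℕ → ℕ × List ℕ
  | [] => (0, [])
  | x :: xs =>
    let m := xs.foldr min x
    let α := (x :: xs).takeWhile (fun a => decide (a ≠ m))
    let β := ((x :: xs).dropWhile (fun a => decide (a ≠ m))).tail
    if α = [] then (m, β)
    else if α.length = 1 then (α.headD 0, β ++ [m])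
    else if β = [] then ((fktInv α).1, m :: (fktInv α).2)
    else ((fktInv α).1, (fktInv α).2 ++ m :: β)
termination_by l => l.length
decreasing_by
  all_goals
    obtain ⟨α, m, β, hl, h⟩ := exists_isMinSplit (List.cons_ne_nil x xs)
    simp only [List.foldr_attach]
    rw [h.foldr_min hl, hl, h.takeWhile]
    simp

theorem fktInv_of_isMinSplit {α β : List ℕ} {m : ℕ} (h : IsMinSplit α m β) :
    fktInv (α ++ m :: β) =
      if α = [] then (m, β)
      else if α.length = 1 then (α.headD 0, β ++ [m])
      else if β = [] then ((fktInv α).1, m :: (fktInv α).2)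
      else ((fktInv α).1, (fktInv α).2 ++ m :: β) := by
  obtain ⟨x, xs, hxs⟩ : ∃ x xs, x :: xs = α ++ m :: β := by cases α <;> simp
  rw [← hxs, fktInv, h.foldr_min hxs, hxs, h.takeWhile, h.dropWhile_tail]

theorem fktInv_cons {k : ℕ} {l : List ℕ} (hl : ∀ a ∈ l, k < a) : fktInv (k :: l) = (k, l) := by
  simpa using fktInv_of_isMinSplit (α := []) (m := k) (β := l) ⟨by simp, fun a ha => (hl a ha).le⟩

theorem fktInv_cons_cons {k m : ℕ} {l : List ℕ} (hmk : m < k) (hl : ∀ a ∈ l, m < a) :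
    fktInv (k :: m :: l) = (k, l ++ [m]) := by
  simpa using fktInv_of_isMinSplit (α := [k]) (m := m) (β := l)
    ⟨by simpa using hmk, fun a ha => (hl a ha).le⟩

theorem fktInv_fkt {k : ℕ} {l : List ℕ} (hk : k ∉ l) (hl : l.Nodup) :
    fktInv (fkt k l) = (k, l) := by
  induction l using IsMinSplit.induction with
  | nil => rw [fkt]; exact fktInv_cons (l := []) (by simp)
  | split α m β h ihα ihβ =>
    simp only [List.mem_append, List.mem_cons, not_or] at hk
    obtain ⟨hkα, hkm, hkβ⟩ := hk
    obtain ⟨hα, hmβ, hβ⟩ : α.Nodup ∧ m ∉ β ∧ β.Nodup := by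
      simp_all [List.nodup_append]
    have hβm : ∀ a ∈ β, m < a := fun a ha => (h.2 a ha).lt_of_ne (by rintro rfl; exact hmβ ha)
    rw [fkt_of_isMinSplit k h]
    split_ifs with hkm' hα0 hβ0
    · exact fktInv_cons fun a ha => hkm'.trans_le (h.le_of_mem ha)
    · have hmk : m < k := by omega
      subst hα0
      rcases eq_or_ne β [] with rfl | hβ0
      · rw [fkt]; exact fktInv_cons_cons hmk (l := []) (by simp)
      rw [fktInv_of_isMinSplit ⟨lt_of_mem_fkt hmk hβm, by simp⟩, if_neg (fkt_ne_nil k β),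
        if_neg (by simpa [length_fkt] using hβ0), if_pos rfl, ihβ hkβ hβ]
      rfl
    · subst hβ0
      exact fktInv_cons_cons (by omega) h.1
    · rw [fktInv_of_isMinSplit ⟨lt_of_mem_fkt (by omega) h.1, h.2⟩, if_neg (fkt_ne_nil k α),
        if_neg (by simpa [length_fkt] using hα0), if_neg hβ0, ihα hkα hα]

theorem fkt_injOn :
    Set.InjOn (fun p : ℕ × List ℕ => fkt p.1 p.2) {p | p.1 ∉ p.2 ∧ p.2.Nodup} :=
  fun p hp q hq he => by
    simpa only [fktInv_fkt hp.1 hp.2, fktInv_fkt hq.1 hq.2] using congrArg fktInv he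

theorem phiW_injOn : Set.InjOn phiW {w | w.Nodup} := by
  intro w₁ h₁ w₂ h₂ he
  have hlen : w₁.length = w₂.length := by
    simpa [(phiW_perm _).length_eq] using congrArg List.length he
  induction w₁ generalizing w₂ with
  | nil => exact (List.length_eq_zero_iff.1 hlen.symm).symm
  | cons a t ih =>
    obtain ⟨b, t', rfl⟩ := List.exists_cons_of_length_eq_add_one hlen.symm
    simp only [Set.mem_ofPred_eq, List.nodup_cons] at h₁ h₂
    obtain ⟨rfl, ht⟩ := Prod.ext_iff.1 <| @fkt_injOn (a, phiW t)
      ⟨mt (phiW_perm t).mem_iff.1 h₁.1, (phiW_perm t).nodup_iff.2 h₁.2⟩ (b, phiW t')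
      ⟨mt (phiW_perm t').mem_iff.1 h₂.1, (phiW_perm t').nodup_iff.2 h₂.2⟩ he
    rw [ih h₁.2 h₂.2 ht (by simpa using hlen)]

/-- The map `φ : S_n → S_n` is a bijection (identifying
permutations of `[n] = {1, …, n}` with words that are rearrangements of
`1 2 ⋯ n`). -/
theorem phi_bijective (n : ℕ) :
    Set.BijOn phiW {w : List ℕ | w.Perm (List.range' 1 n)}
      {w : List ℕ | w.Perm (List.range' 1 n)} := by
  have hfin : {w : List ℕ | w.Perm (List.range' 1 n)}.Finite :=
    (List.range' 1 n).permutations.toFinset.finite_toSet.subset fun w hw => by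
      simpa [List.mem_permutations] using hw
  have hmaps : Set.MapsTo phiW {w | w.Perm (List.range' 1 n)} {w | w.Perm (List.range' 1 n)} :=
    fun w hw => (phiW_perm w).trans hw
  have hinj : Set.InjOn phiW {w : List ℕ | w.Perm (List.range' 1 n)} :=
    phiW_injOn.mono fun w hw => hw.nodup_iff.2 List.nodup_range'
  exact (hfin.injOn_iff_bijOn_of_mapsTo hmaps).1 hinj

end PaperStats
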